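/- Consider a finite N-player game: for each player i ∈ {1,…,N} a finite nonempty action set A_i, the profile set A = A_1 × ⋯ × A_N, and utility functions u_i : A → ℝ. Let k_1, k_2, … ∈ A be a sequence of profiles, f_T(b) = |{t ≤ T : k_t = b}|/T the empirical frequency, and R_T(i, a, a') = max{0, (1/T) Σ_{t ≤ T, (k_t)_i = a} (u_i(a', (k_t)_{-i}) − u_i(k_t))} the regret of player i for the pair (a, a'). Suppose that for every player i and every pair a ≠ a' in A_i there is a sequence of real numbers (R̃_T(i, a, a'))_{T ≥ 1} with R_T(i, a, a') ≤ R̃_T(i, a, a') for all T and R̃_T(i, a, a') → 0 as T → ∞. Then the empirical frequencies converge to the set of correlated equilibria: inf{ max_{b ∈ A} |f_T(b) − ψ(b)| : ψ a correlated equilibrium } → 0 as T → ∞. -/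

import Mathlib

/-!
The sum `∑_{b_i = a} f_T(b) (u_i(a', b_{-i}) - u_i(b))` is exactly the time average inside
`R_T(i, a, a')`, so it is at most `R̃_T(i, a, a')`: for every `ε > 0` the empirical distributions
are eventually correlated `ε`-equilibria. These form closed subsets of the compact simplex, hence
every cluster point of `(f_T)` is a correlated equilibrium, and a sequence in a compact set all of
whose cluster points lie in `C` has (sup-)distance to `C` tending to zero.
-/

open Filter

/-- A probability distribution `ψ` on the profile set is a correlated
`ε`-equilibrium. -/
def IsCorrelatedEpsEquilibrium {N : ℕ} {A : Fin N → Type*}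
    [∀ i, Fintype (A i)] [∀ i, DecidableEq (A i)]
    (u : (i : Fin N) → ((∀ j, A j) → ℝ)) (ε : ℝ)
    (ψ : (∀ j, A j) → ℝ) : Prop :=
  (∀ b, 0 ≤ ψ b) ∧ (∑ b : (∀ j, A j), ψ b = 1) ∧
    ∀ (i : Fin N) (a a' : A i),
      ∑ b ∈ Finset.univ.filter (fun b : (∀ j, A j) => b i = a),
        ψ b * (u i (Function.update b i a') - u i b) ≤ ε

open Finset Metric Topology

section SupDistance

variable {ι : Type*} [Fintype ι] [Nonempty ι]

lemma dist_pi_eq_sup'_abs_sub (x y : ι → ℝ) :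
    dist x y = univ.sup' univ_nonempty (fun b => |x b - y b|) := by
  refine le_antisymm ((dist_pi_le_iff ?_).2 fun b => ?_) (sup'_le _ _ fun b _ => ?_)
  · obtain ⟨b⟩ := ‹Nonempty ι›
    exact (abs_nonneg _).trans (le_sup' (fun b => |x b - y b|) (mem_univ b))
  · exact (Real.dist_eq _ _).trans_le (le_sup' (fun b => |x b - y b|) (mem_univ b))
  · exact (Real.dist_eq _ _).symm.trans_le (dist_le_pi_dist x y b)

lemma sInf_sup'_abs_sub_eq_infDist (x : ι → ℝ) (P : (ι → ℝ) → Prop) :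
    sInf {d | ∃ ψ, P ψ ∧ d = univ.sup' univ_nonempty (fun b => |x b - ψ b|)} =
      infDist x {ψ | P ψ} := by
  rw [infDist_eq_iInf, iInf]
  congr 1
  ext d
  simp [dist_pi_eq_sup'_abs_sub, eq_comm]

end SupDistance

lemma tendsto_infDist_of_forall_mapClusterPt_mem {X ι : Type*} [PseudoMetricSpace X]
    {l : Filter ι} {x : ι → X} {K C : Set X} (hK : IsCompact K) (hxK : ∀ᶠ n in l, x n ∈ K)
    (hC : ∀ y, MapClusterPt y l x → y ∈ C) :
    Tendsto (fun n => infDist (x n) C) l (𝓝 0) := by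
  refine tendsto_order.2 ⟨fun a ha => .of_forall fun n => ha.trans_le infDist_nonneg,
    fun δ hδ => ?_⟩
  by_contra hfar
  rw [not_eventually] at hfar
  have hcompact : IsCompact (K ∩ {y | δ ≤ infDist y C}) :=
    hK.inter_right (isClosed_le continuous_const (continuous_infDist_pt C))
  obtain ⟨y, ⟨-, hyδ⟩, hy⟩ := hcompact.exists_mapClusterPt_of_frequently
    ((hfar.and_eventually hxK).mono fun n hn => ⟨hn.2, not_lt.1 hn.1⟩)
  have hy0 : infDist y C = 0 := infDist_zero_of_mem (hC y hy)
  exact hδ.not_ge (hy0 ▸ hyδ)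

section EmpiricalFrequency

variable {P : Type*} [DecidableEq P] (k : ℕ → P)

noncomputable def empiricalFreq (T : ℕ) (b : P) : ℝ :=
  #{t ∈ Icc 1 T | k t = b} / T

variable [Fintype P]

lemma empiricalFreq_mem_stdSimplex {T : ℕ} (hT : 1 ≤ T) :
    empiricalFreq k T ∈ stdSimplex ℝ P := by
  refine ⟨fun b => by unfold empiricalFreq; positivity, ?_⟩
  have hcard : #(Icc 1 T) = ∑ b, #{t ∈ Icc 1 T | k t = b} :=
    card_eq_sum_card_fiberwise fun t _ => mem_univ (k t)
  have hT0 : (T : ℝ) ≠ 0 := by positivity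
  simp only [empiricalFreq, ← sum_div, ← Nat.cast_sum, ← hcard, Nat.card_Icc,
    Nat.add_sub_cancel, div_self hT0]

lemma sum_filter_empiricalFreq_mul (T : ℕ) (p : P → Prop) [DecidablePred p] (c : P → ℝ) :
    ∑ b with p b, empiricalFreq k T b * c b =
      1 / T * ∑ t ∈ Icc 1 T, if p (k t) then c (k t) else 0 := by
  have hfiber := sum_fiberwise_eq_sum_filter' (Icc 1 T) {b | p b} k c
  simp only [mem_filter_univ] at hfiber
  rw [← sum_filter, ← hfiber, mul_sum]
  refine sum_congr rfl fun b _ => ?_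
  rw [sum_const, nsmul_eq_mul, empiricalFreq]
  ring

end EmpiricalFrequency

section CorrelatedEquilibrium

variable {N : ℕ} {A : Fin N → Type*} [∀ i, Fintype (A i)] [∀ i, DecidableEq (A i)]
  (u : (i : Fin N) → ((∀ j, A j) → ℝ))

def deviationGain (ψ : (∀ j, A j) → ℝ) (i : Fin N) (a a' : A i) : ℝ :=
  ∑ b with b i = a, ψ b * (u i (Function.update b i a') - u i b)

lemma isCorrelatedEpsEquilibrium_iff {ε : ℝ} {ψ : (∀ j, A j) → ℝ} :
    IsCorrelatedEpsEquilibrium u ε ψ ↔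
      ψ ∈ stdSimplex ℝ (∀ j, A j) ∧ ∀ i a a', deviationGain u ψ i a a' ≤ ε :=
  and_assoc.symm

lemma deviationGain_self (ψ : (∀ j, A j) → ℝ) (i : Fin N) (a : A i) :
    deviationGain u ψ i a a = 0 :=
  sum_eq_zero fun b hb => by
    rw [← (mem_filter.1 hb).2, Function.update_eq_self, sub_self, mul_zero]

lemma continuous_deviationGain (i : Fin N) (a a' : A i) :
    Continuous fun ψ => deviationGain u ψ i a a' := by
  unfold deviationGain
  fun_prop

lemma isClosed_setOf_isCorrelatedEpsEquilibrium (ε : ℝ) :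
    IsClosed {ψ | IsCorrelatedEpsEquilibrium u ε ψ} := by
  simp only [isCorrelatedEpsEquilibrium_iff, Set.ofPred_and, Set.ofPred_forall]
  exact (isClosed_stdSimplex _ _).inter <| isClosed_iInter fun i => isClosed_iInter fun a =>
    isClosed_iInter fun a' => isClosed_le (continuous_deviationGain u i a a') continuous_const

lemma IsCorrelatedEpsEquilibrium.mem_stdSimplex {ε : ℝ} {ψ : (∀ j, A j) → ℝ}
    (h : IsCorrelatedEpsEquilibrium u ε ψ) : ψ ∈ stdSimplex ℝ (∀ j, A j) :=
  ((isCorrelatedEpsEquilibrium_iff u).1 h).1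

lemma isCorrelatedEpsEquilibrium_of_deviationGain_le {ε : ℝ} {ψ : (∀ j, A j) → ℝ}
    (hε : 0 ≤ ε) (hψ : ψ ∈ stdSimplex ℝ (∀ j, A j))
    (hgain : ∀ i (a a' : A i), a ≠ a' → deviationGain u ψ i a a' ≤ ε) :
    IsCorrelatedEpsEquilibrium u ε ψ := by
  refine (isCorrelatedEpsEquilibrium_iff u).2 ⟨hψ, fun i a a' => ?_⟩
  rcases eq_or_ne a a' with rfl | hne
  · exact (deviationGain_self u ψ i a).trans_le hε
  · exact hgain i a a' hne

lemma isCorrelatedEpsEquilibrium_zero_of_forall_pos {ψ : (∀ j, A j) → ℝ}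
    (h : ∀ ε > 0, IsCorrelatedEpsEquilibrium u ε ψ) : IsCorrelatedEpsEquilibrium u 0 ψ := by
  refine (isCorrelatedEpsEquilibrium_iff u).2 ⟨(h 1 one_pos).mem_stdSimplex u, fun i a a' => ?_⟩
  refine le_of_forall_pos_le_add fun ε hε => ?_
  rw [zero_add]
  exact ((isCorrelatedEpsEquilibrium_iff u).1 (h ε hε)).2 i a a'

lemma isCorrelatedEpsEquilibrium_zero_of_mapClusterPt {ι : Type*} {l : Filter ι}
    {x : ι → (∀ j, A j) → ℝ}
    (hx : ∀ ε > 0, ∀ᶠ n in l, IsCorrelatedEpsEquilibrium u ε (x n))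
    {ψ : (∀ j, A j) → ℝ} (hψ : MapClusterPt ψ l x) : IsCorrelatedEpsEquilibrium u 0 ψ :=
  isCorrelatedEpsEquilibrium_zero_of_forall_pos u fun ε hε =>
    (isClosed_setOf_isCorrelatedEpsEquilibrium u ε).mem_of_mapClusterPt hψ (hx ε hε)

lemma deviationGain_empiricalFreq (k : ℕ → ∀ j, A j) (T : ℕ) (i : Fin N) (a a' : A i) :
    deviationGain u (empiricalFreq k T) i a a' = 1 / T * ∑ t ∈ Icc 1 T,
      if k t i = a then u i (Function.update (k t) i a') - u i (k t) else 0 :=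
  sum_filter_empiricalFreq_mul k T (fun b => b i = a) _

end CorrelatedEquilibrium

theorem dominated_vanishing_regret_implies_convergence_to_CE
    {N : ℕ} (A : Fin N → Type*) [∀ i, Fintype (A i)] [∀ i, DecidableEq (A i)]
    [∀ i, Nonempty (A i)]
    (u : (i : Fin N) → ((∀ j, A j) → ℝ))
    (k : ℕ → (∀ j, A j))
    (f : ℕ → (∀ j, A j) → ℝ)
    (hf : ∀ T b, f T b =
      ((Finset.Icc 1 T).filter (fun t => k t = b)).card / (T : ℝ))
    (R : ℕ → (i : Fin N) → A i → A i → ℝ)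
    (hR : ∀ T i a a', R T i a a' = max 0 ((1 / (T : ℝ)) *
      ∑ t ∈ Finset.Icc 1 T,
        (if k t i = a then u i (Function.update (k t) i a') - u i (k t) else 0)))
    (REst : ℕ → (i : Fin N) → A i → A i → ℝ)
    (hdom : ∀ (T : ℕ) (i : Fin N) (a a' : A i), a ≠ a' →
      R T i a a' ≤ REst T i a a')
    (hto0 : ∀ (i : Fin N) (a a' : A i), a ≠ a' →
      Tendsto (fun T => REst T i a a') atTop (nhds 0)) :
    Tendsto (fun T => sInf {d : ℝ | ∃ ψ : (∀ j, A j) → ℝ,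
        IsCorrelatedEpsEquilibrium u 0 ψ ∧
        d = Finset.univ.sup' Finset.univ_nonempty
              (fun b : (∀ j, A j) => |f T b - ψ b|)})
      atTop (nhds 0) := by
  have hf_eq : f = empiricalFreq k := funext fun T => funext (hf T)
  have hgain : ∀ T i (a a' : A i), a ≠ a' → deviationGain u (f T) i a a' ≤ REst T i a a' :=
    fun T i a a' hne => by
      rw [hf_eq, deviationGain_empiricalFreq]
      exact (hR T i a a' ▸ le_max_right _ _).trans (hdom T i a a' hne)
  have hCE : ∀ ε > 0, ∀ᶠ T in atTop, IsCorrelatedEpsEquilibrium u ε (f T) := by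
    intro ε hε
    have hsmall : ∀ᶠ T in atTop, ∀ i (a a' : A i), a ≠ a' → REst T i a a' < ε := by
      simp only [eventually_all]
      exact fun i a a' hne => (hto0 i a a' hne).eventually_lt_const hε
    filter_upwards [hsmall, eventually_ge_atTop 1] with T hT hT1
    exact isCorrelatedEpsEquilibrium_of_deviationGain_le u hε.le
      (hf_eq ▸ empiricalFreq_mem_stdSimplex k hT1)
      fun i a a' hne => (hgain T i a a' hne).trans (hT i a a' hne).le
  simp only [sInf_sup'_abs_sub_eq_infDist]
  exact tendsto_infDist_of_forall_mapClusterPt_mem (isCompact_stdSimplex ℝ _)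
    ((hCE 1 one_pos).mono fun T h => h.mem_stdSimplex u)
    fun ψ hψ => isCorrelatedEpsEquilibrium_zero_of_mapClusterPt u hCE hψ
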